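/- Let (X,b,c,m) be a weighted graph. Then Q^(N)_{b,c} is dominated by Q^(N)_{b,0} with respect to the pointwise modulus on ℓ²(X,m): that is, (i) for every f in the domain of Q^(N)_{b,c}, |f| lies in the domain of Q^(N)_{b,0}; (ii) for every such f and every g in the domain of Q^(N)_{b,0} with 0 ≤ g ≤ |f| pointwise, the function g·sgn f (defined by x ↦ g(x)f(x)/|f(x)| if f(x) ≠ 0 and 0 otherwise) lies in the domain of Q^(N)_{b,c}; and (iii) for all f, f̃ in the domain of Q^(N)_{b,c} with f(x)·conj(f̃(x)) = |f(x)||f̃(x)| for all x ∈ X, one has Re Q^(N)_{b,c}(f,f̃) ≥ Q^(N)_{b,0}(|f|,|f̃|), where Q^(N)_{b,c}(f,g) = ½∑_{x,y} b(x,y)(f(x) − f(y))·conj(g(x) − g(y)) + ∑_x c(x)f(x)·conj(g(x)). -/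

import Mathlib

open scoped ENNReal ComplexInnerProductSpace Classical

noncomputable section

/-- `u` is an `ℓ²`-section with respect to the vertex measure `m`. -/
def MemL2Sec {X : Type*} {E : X → Type*} [∀ x, NormedAddCommGroup (E x)]
    (m : X → ℝ) (u : ∀ x, E x) : Prop :=
  Summable fun x => ‖u x‖ ^ 2 * m x

/-- The magnetic Schrödinger energy `Q̃_{Φ,b,W}(u) ∈ [0,∞]` of a section `u`. -/
def magEnergy {X : Type*} {E : X → Type*} [∀ x, NormedAddCommGroup (E x)]
    [∀ x, InnerProductSpace ℂ (E x)]
    (b : X → X → ℝ) (Φ : ∀ x y, E y ≃ₗᵢ[ℂ] E x) (W : ∀ x, E x →ₗ[ℂ] E x)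
    (u : ∀ x, E x) : ℝ≥0∞ :=
  1 / 2 * ∑' p : X × X, ENNReal.ofReal (b p.1 p.2 * ‖u p.1 - Φ p.1 p.2 (u p.2)‖ ^ 2)
    + ∑' x, ENNReal.ofReal (⟪W x (u x), u x⟫).re

/-- The scalar Schrödinger energy `Q̃_{b,c}(f) ∈ [0,∞]` of a function `f : X → ℂ`. -/
def scalEnergy {X : Type*} (b : X → X → ℝ) (c : X → ℝ) (f : X → ℂ) : ℝ≥0∞ :=
  1 / 2 * ∑' p : X × X, ENNReal.ofReal (b p.1 p.2 * ‖f p.1 - f p.2‖ ^ 2)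
    + ∑' x, ENNReal.ofReal (c x * ‖f x‖ ^ 2)

/-- Membership in the domain of the Neumann magnetic form `Q^(N)_{Φ,b,W}`. -/
def inMagDom {X : Type*} {E : X → Type*} [∀ x, NormedAddCommGroup (E x)]
    [∀ x, InnerProductSpace ℂ (E x)] (m : X → ℝ)
    (b : X → X → ℝ) (Φ : ∀ x y, E y ≃ₗᵢ[ℂ] E x) (W : ∀ x, E x →ₗ[ℂ] E x)
    (u : ∀ x, E x) : Prop :=
  MemL2Sec m u ∧ magEnergy b Φ W u < ⊤

/-- Membership in the domain of the Neumann scalar form `Q^(N)_{b,c}`. -/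
def inScalDom {X : Type*} (m : X → ℝ) (b : X → X → ℝ) (c : X → ℝ) (f : X → ℂ) : Prop :=
  (Summable fun x => ‖f x‖ ^ 2 * m x) ∧ scalEnergy b c f < ⊤

end

open ComplexConjugate
open scoped ComplexOrder

noncomputable section

/-- The sesquilinear scalar Schrödinger form
`Q^(N)_{b,c}(f,g) = ½∑_{x,y} b(x,y)(f(x) − f(y))·conj(g(x) − g(y)) + ∑_x c(x)f(x)·conj(g(x))`. -/
def scalSesqC {X : Type*} (b : X → X → ℝ) (c : X → ℝ) (f g : X → ℂ) : ℂ :=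
  1 / 2 * ∑' p : X × X, (b p.1 p.2 : ℂ) * ((f p.1 - f p.2) * conj (g p.1 - g p.2))
    + ∑' x, (c x : ℂ) * (f x * conj (g x))

/-- The function `g · sgn f`, given by `x ↦ g(x)f(x)/|f(x)|` when `f(x) ≠ 0`, else `0`. -/
def sgnMulC {X : Type*} (g f : X → ℂ) : X → ℂ :=
  fun x => if f x = 0 then 0 else g x * f x / (‖f x‖ : ℂ)

end

/-!
All three parts are pointwise inequalities for complex numbers, summed against `b` and `c`.
(i) is the reverse triangle inequality `||z| - |w|| ≤ |z - w|`. For (ii), write `z = |z| u` and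
`w = |w| v` with `|u| = |v| = 1`; then `|r u - s v|² = (r - s)² + r s |u - v|²`, and comparing
this with the same identity for `z - w` gives `|r u - s v|² ≤ (r - s)² + |z - w|²` whenever
`0 ≤ r ≤ |z|` and `0 ≤ s ≤ |w|`, so the energy of `g · sgn f` is at most the sum of the energies
of `g` and `f`. For (iii), `z z̄' = |z||z'|` and `w w̄' = |w||w'|` give
`(|z| - |w|)(|z'| - |w'|) ≤ Re ((z - w) (z' - w')‾)` by Cauchy–Schwarz on the cross terms, while
the killing term of `Q(f, f')` is `c |f||f'| ≥ 0`; all series converge absolutely because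
`2|a b| ≤ |a|² + |b|²` and the energies are finite.
-/

open Complex

lemma norm_smul_sub_smul_sq {E : Type*} [NormedAddCommGroup E] [InnerProductSpace ℝ E]
    {u v : E} (hu : ‖u‖ = 1) (hv : ‖v‖ = 1) (r s : ℝ) :
    ‖r • u - s • v‖ ^ 2 = (r - s) ^ 2 + r * s * ‖u - v‖ ^ 2 := by
  rw [norm_sub_sq_real, norm_sub_sq_real, norm_smul, norm_smul, real_inner_smul_left,
    real_inner_smul_right, hu, hv, mul_pow, mul_pow, Real.norm_eq_abs, Real.norm_eq_abs, sq_abs,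
    sq_abs]
  ring

lemma norm_sub_sq_eq_polar (z w : ℂ) :
    ‖z - w‖ ^ 2 = (‖z‖ - ‖w‖) ^ 2 + ‖z‖ * ‖w‖ * ‖exp (arg z * I) - exp (arg w * I)‖ ^ 2 := by
  conv_lhs => rw [← norm_mul_exp_arg_mul_I z, ← norm_mul_exp_arg_mul_I w]
  rw [← real_smul (x := ‖z‖), ← real_smul (x := ‖w‖)]
  exact norm_smul_sub_smul_sq (norm_exp_ofReal_mul_I _) (norm_exp_ofReal_mul_I _) _ _

lemma norm_mul_exp_arg_sub_sq_le {p q z w : ℂ} (hp : 0 ≤ p) (hq : 0 ≤ q) (hpz : p ≤ ‖z‖)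
    (hqw : q ≤ ‖w‖) :
    ‖p * exp (arg z * I) - q * exp (arg w * I)‖ ^ 2 ≤ ‖p - q‖ ^ 2 + ‖z - w‖ ^ 2 := by
  obtain ⟨r, rfl⟩ : ∃ r : ℝ, (r : ℂ) = p := ⟨p.re, (eq_re_of_ofReal_le hp).symm⟩
  obtain ⟨s, rfl⟩ : ∃ s : ℝ, (s : ℂ) = q := ⟨q.re, (eq_re_of_ofReal_le hq).symm⟩
  rw [real_le_real] at hpz hqw
  rw [zero_le_real] at hp hq
  rw [← real_smul (x := r), ← real_smul (x := s), norm_smul_sub_smul_sq (norm_exp_ofReal_mul_I _)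
    (norm_exp_ofReal_mul_I _), norm_sub_sq_eq_polar z w, ← ofReal_sub, norm_real,
    Real.norm_eq_abs, sq_abs]
  have hrs : r * s * ‖exp (arg z * I) - exp (arg w * I)‖ ^ 2
      ≤ ‖z‖ * ‖w‖ * ‖exp (arg z * I) - exp (arg w * I)‖ ^ 2 := by
    gcongr
  linarith [sq_nonneg (‖z‖ - ‖w‖)]

lemma re_mul_conj_norm_sub_le {z z' w w' : ℂ}
    (hz : z * conj z' = ((‖z‖ * ‖z'‖ : ℝ) : ℂ)) (hw : w * conj w' = ((‖w‖ * ‖w'‖ : ℝ) : ℂ)) :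
    (((‖z‖ : ℂ) - ‖w‖) * conj ((‖z'‖ : ℂ) - ‖w'‖)).re ≤ ((z - w) * conj (z' - w')).re := by
  have hzw' : (z * conj w').re ≤ ‖z‖ * ‖w'‖ := by
    simpa using re_le_norm (z * conj w')
  have hwz' : (w * conj z').re ≤ ‖w‖ * ‖z'‖ := by
    simpa using re_le_norm (w * conj z')
  have hzz' := congrArg re hz
  have hww' := congrArg re hw
  simp only [ofReal_re] at hzz' hww'
  simp only [map_sub, sub_mul, mul_sub, sub_re, conj_ofReal, ← ofReal_mul, ofReal_re]
  linarith

lemma summable_of_tsum_ofReal_ne_top {ι : Type*} {g : ι → ℝ} (hg : ∀ i, 0 ≤ g i)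
    (h : ∑' i, ENNReal.ofReal (g i) ≠ ⊤) : Summable g := by
  simpa [ENNReal.toReal_ofReal (hg _)] using ENNReal.summable_toReal h

lemma summable_ofReal_mul_mul_conj {ι : Type*} {w : ι → ℝ} {u v : ι → ℂ} (hw : ∀ i, 0 ≤ w i)
    (hu : Summable fun i => w i * ‖u i‖ ^ 2) (hv : Summable fun i => w i * ‖v i‖ ^ 2) :
    Summable fun i => (w i : ℂ) * (u i * conj (v i)) :=
  Summable.of_norm_bounded ((hu.add hv).div_const 2) fun i => by
    rw [norm_mul, norm_mul, norm_real, Real.norm_eq_abs, abs_of_nonneg (hw i), norm_conj]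
    nlinarith [mul_nonneg (hw i) (sq_nonneg (‖u i‖ - ‖v i‖))]

lemma MemL2Sec.of_norm_le {X : Type*} {E F : X → Type*} [∀ x, NormedAddCommGroup (E x)]
    [∀ x, NormedAddCommGroup (F x)] {m : X → ℝ} {u : ∀ x, E x} {v : ∀ x, F x}
    (hv : MemL2Sec m v) (huv : ∀ x, ‖u x‖ ≤ ‖v x‖) : MemL2Sec m u :=
  Summable.of_norm_bounded hv.abs fun x => by
    simp only [Real.norm_eq_abs, abs_mul, abs_pow, abs_norm]
    gcongr
    exact huv x

section Energy

variable {X : Type*} {b : X → X → ℝ} {c : X → ℝ}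

lemma scalEnergy_zero_le_of_norm_sub_le (hb : ∀ x y, 0 ≤ b x y) {f h : X → ℂ}
    (hfh : ∀ x y, ‖h x - h y‖ ≤ ‖f x - f y‖) :
    scalEnergy b (fun _ => 0) h ≤ scalEnergy b c f := by
  unfold scalEnergy
  simp only [zero_mul, ENNReal.ofReal_zero, tsum_zero, add_zero]
  refine le_trans ?_ le_self_add
  gcongr with p
  · exact hb _ _
  · exact hfh _ _

lemma scalEnergy_le_add (hb : ∀ x y, 0 ≤ b x y) (hc : ∀ x, 0 ≤ c x) {f g h : X → ℂ}
    (hedge : ∀ x y, ‖h x - h y‖ ^ 2 ≤ ‖g x - g y‖ ^ 2 + ‖f x - f y‖ ^ 2)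
    (hkill : ∀ x, ‖h x‖ ≤ ‖f x‖) :
    scalEnergy b c h ≤ scalEnergy b (fun _ => 0) g + scalEnergy b c f := by
  unfold scalEnergy
  simp only [zero_mul, ENNReal.ofReal_zero, tsum_zero, add_zero]
  have hE : ∑' p : X × X, ENNReal.ofReal (b p.1 p.2 * ‖h p.1 - h p.2‖ ^ 2)
      ≤ ∑' p : X × X, ENNReal.ofReal (b p.1 p.2 * ‖g p.1 - g p.2‖ ^ 2)
        + ∑' p : X × X, ENNReal.ofReal (b p.1 p.2 * ‖f p.1 - f p.2‖ ^ 2) := by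
    rw [← ENNReal.tsum_add]
    gcongr with p
    rw [← ENNReal.ofReal_add (by have := hb p.1 p.2; positivity)
      (by have := hb p.1 p.2; positivity), ← mul_add]
    exact ENNReal.ofReal_le_ofReal (mul_le_mul_of_nonneg_left (hedge _ _) (hb _ _))
  have hK : ∑' x, ENNReal.ofReal (c x * ‖h x‖ ^ 2) ≤ ∑' x, ENNReal.ofReal (c x * ‖f x‖ ^ 2) := by
    gcongr with x
    · exact hc x
    · exact hkill x
  calc _ ≤ 1 / 2 * (∑' p : X × X, ENNReal.ofReal (b p.1 p.2 * ‖g p.1 - g p.2‖ ^ 2)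
        + ∑' p : X × X, ENNReal.ofReal (b p.1 p.2 * ‖f p.1 - f p.2‖ ^ 2))
        + ∑' x, ENNReal.ofReal (c x * ‖f x‖ ^ 2) := by gcongr
    _ = _ := by rw [mul_add, add_assoc]

lemma summable_of_scalEnergy_lt_top (hb : ∀ x y, 0 ≤ b x y) (hc : ∀ x, 0 ≤ c x) {f : X → ℂ}
    (hf : scalEnergy b c f < ⊤) :
    (Summable fun p : X × X => b p.1 p.2 * ‖f p.1 - f p.2‖ ^ 2) ∧
      Summable fun x => c x * ‖f x‖ ^ 2 := by
  obtain ⟨hE, hK⟩ := ENNReal.add_lt_top.mp hf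
  refine ⟨summable_of_tsum_ofReal_ne_top (fun p => by have := hb p.1 p.2; positivity) ?_,
    summable_of_tsum_ofReal_ne_top (fun x => by have := hc x; positivity) hK.ne⟩
  exact (ENNReal.lt_top_of_mul_ne_top_right hE.ne (by norm_num)).ne

lemma re_scalSesqC_le_re_scalSesqC {c' : X → ℝ} {f g f' g' : X → ℂ}
    (hE : Summable fun p : X × X => (b p.1 p.2 : ℂ) * ((f p.1 - f p.2) * conj (g p.1 - g p.2)))
    (hK : Summable fun x => (c x : ℂ) * (f x * conj (g x)))
    (hE' : Summable fun p : X × X =>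
      (b p.1 p.2 : ℂ) * ((f' p.1 - f' p.2) * conj (g' p.1 - g' p.2)))
    (hK' : Summable fun x => (c' x : ℂ) * (f' x * conj (g' x)))
    (hedge : ∀ p : X × X, ((b p.1 p.2 : ℂ) * ((f p.1 - f p.2) * conj (g p.1 - g p.2))).re
      ≤ ((b p.1 p.2 : ℂ) * ((f' p.1 - f' p.2) * conj (g' p.1 - g' p.2))).re)
    (hkill : ∀ x, ((c x : ℂ) * (f x * conj (g x))).re ≤ ((c' x : ℂ) * (f' x * conj (g' x))).re) :
    (scalSesqC b c f g).re ≤ (scalSesqC b c' f' g').re := by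
  have hhalf : (1 / 2 : ℂ) = ((1 / 2 : ℝ) : ℂ) := by norm_num
  unfold scalSesqC
  rw [add_re, add_re, hhalf, re_ofReal_mul, re_ofReal_mul, re_tsum hE, re_tsum hE', re_tsum hK,
    re_tsum hK']
  gcongr ?_ * ?_ + ?_
  · exact (hE.mapL reCLM).tsum_le_tsum hedge (hE'.mapL reCLM)
  · exact (hK.mapL reCLM).tsum_le_tsum hkill (hK'.mapL reCLM)

lemma inScalDom_norm {m : X → ℝ} (hb : ∀ x y, 0 ≤ b x y) {f : X → ℂ} (hf : inScalDom m b c f) :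
    inScalDom m b (fun _ => 0) fun x => (‖f x‖ : ℂ) := by
  refine ⟨MemL2Sec.of_norm_le (E := fun _ => ℂ) hf.1 fun x => by simp, ?_⟩
  refine (scalEnergy_zero_le_of_norm_sub_le hb fun x y => ?_).trans_lt hf.2
  rw [← ofReal_sub, norm_real, Real.norm_eq_abs]
  exact abs_norm_sub_norm_le _ _

lemma sgnMulC_apply_eq_mul_exp_arg {f g : X → ℂ} {x : X} (hfg : f x = 0 → g x = 0) :
    sgnMulC g f x = g x * exp (arg (f x) * I) := by
  unfold sgnMulC
  split_ifs with hx
  · simp [hfg hx]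
  · rw [mul_div_assoc, div_eq_of_eq_mul (ofReal_ne_zero.mpr (norm_ne_zero_iff.mpr hx))
      (by rw [mul_comm, norm_mul_exp_arg_mul_I])]

lemma inScalDom_sgnMulC {m : X → ℝ} (hb : ∀ x y, 0 ≤ b x y) (hc : ∀ x, 0 ≤ c x) {f g : X → ℂ}
    (hf : inScalDom m b c f) (hg : inScalDom m b (fun _ => 0) g)
    (hfg : ∀ x, 0 ≤ g x ∧ g x ≤ (‖f x‖ : ℂ)) : inScalDom m b c (sgnMulC g f) := by
  have hsgn (x : X) : sgnMulC g f x = g x * exp (arg (f x) * I) :=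
    sgnMulC_apply_eq_mul_exp_arg fun hx => le_antisymm (by simpa [hx] using (hfg x).2) (hfg x).1
  have hnorm (x : X) : ‖sgnMulC g f x‖ ≤ ‖f x‖ := by
    rw [hsgn, norm_mul, norm_exp_ofReal_mul_I, mul_one]
    simpa using CStarAlgebra.norm_le_norm_of_nonneg_of_le (hfg x).1 (hfg x).2
  refine ⟨MemL2Sec.of_norm_le (E := fun _ => ℂ) hf.1 hnorm, ?_⟩
  refine (scalEnergy_le_add hb hc (fun x y => ?_) hnorm).trans_lt
    (ENNReal.add_lt_top.mpr ⟨hg.2, hf.2⟩)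
  rw [hsgn, hsgn]
  exact norm_mul_exp_arg_sub_sq_le (hfg x).1 (hfg y).1 (hfg x).2 (hfg y).2

lemma re_scalSesqC_norm_le {m : X → ℝ} (hb : ∀ x y, 0 ≤ b x y) (hc : ∀ x, 0 ≤ c x)
    {f f' : X → ℂ} (hf : inScalDom m b c f) (hf' : inScalDom m b c f')
    (hpair : ∀ x, f x * conj (f' x) = ((‖f x‖ * ‖f' x‖ : ℝ) : ℂ)) :
    (scalSesqC b (fun _ => 0) (fun x => (‖f x‖ : ℂ)) (fun x => (‖f' x‖ : ℂ))).re
      ≤ (scalSesqC b c f f').re := by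
  have h0 : ∀ x : X, (0 : ℝ) ≤ 0 := fun _ => le_rfl
  obtain ⟨hEf, hKf⟩ := summable_of_scalEnergy_lt_top hb hc hf.2
  obtain ⟨hEf', hKf'⟩ := summable_of_scalEnergy_lt_top hb hc hf'.2
  obtain ⟨hEn, hKn⟩ := summable_of_scalEnergy_lt_top hb h0 (inScalDom_norm hb hf).2
  obtain ⟨hEn', hKn'⟩ := summable_of_scalEnergy_lt_top hb h0 (inScalDom_norm hb hf').2
  refine re_scalSesqC_le_re_scalSesqC
    (summable_ofReal_mul_mul_conj (fun p => hb p.1 p.2) hEn hEn')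
    (summable_ofReal_mul_mul_conj h0 hKn hKn')
    (summable_ofReal_mul_mul_conj (fun p => hb p.1 p.2) hEf hEf')
    (summable_ofReal_mul_mul_conj hc hKf hKf') (fun p => ?_) (fun x => ?_)
  · rw [re_ofReal_mul, re_ofReal_mul]
    exact mul_le_mul_of_nonneg_left (re_mul_conj_norm_sub_le (hpair _) (hpair _)) (hb _ _)
  · rw [hpair, ← ofReal_mul, ofReal_re, ofReal_zero, zero_mul, zero_re]
    have := hc x
    positivity

end Energy

theorem stmt12_general {X : Type*}
    (b : X → X → ℝ) (hb0 : ∀ x y, 0 ≤ b x y)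
    (c : X → ℝ) (hc : ∀ x, 0 ≤ c x) (m : X → ℝ) :
    -- (i)
    (∀ f : X → ℂ, inScalDom m b c f →
      inScalDom m b (fun _ => (0 : ℝ)) fun x => (‖f x‖ : ℂ)) ∧
    -- (ii)
    (∀ f : X → ℂ, inScalDom m b c f → ∀ g : X → ℂ,
      inScalDom m b (fun _ => (0 : ℝ)) g →
      (∀ x, 0 ≤ g x ∧ g x ≤ (‖f x‖ : ℂ)) →
        inScalDom m b c (sgnMulC g f)) ∧
    -- (iii)
    (∀ f f' : X → ℂ, inScalDom m b c f → inScalDom m b c f' →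
      (∀ x, f x * conj (f' x) = ((‖f x‖ * ‖f' x‖ : ℝ) : ℂ)) →
        (scalSesqC b (fun _ => (0 : ℝ)) (fun x => (‖f x‖ : ℂ))
            (fun x => (‖f' x‖ : ℂ))).re ≤ (scalSesqC b c f f').re) :=
  ⟨fun _ hf => inScalDom_norm hb0 hf,
    fun _ hf _ hg hfg => inScalDom_sgnMulC hb0 hc hf hg hfg,
    fun _ _ hf hf' hpair => re_scalSesqC_norm_le hb0 hc hf hf' hpair⟩

/-- For a weighted graph `(X,b,c,m)`, the scalar form `Q^(N)_{b,c}` is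
dominated by `Q^(N)_{b,0}` with respect to the pointwise modulus: (i) `f` in the domain of
`Q^(N)_{b,c}` implies `|f|` in the domain of `Q^(N)_{b,0}`; (ii) if moreover `g` is in the
domain of `Q^(N)_{b,0}` with `0 ≤ g ≤ |f|` pointwise, then `g·sgn f` is in the domain of
`Q^(N)_{b,c}`; (iii) `Re Q^(N)_{b,c}(f,f̃) ≥ Q^(N)_{b,0}(|f|,|f̃|)` for pointwise paired
`f, f̃` in the domain of `Q^(N)_{b,c}`. -/
theorem stmt12 {X : Type*} [Countable X]
    (b : X → X → ℝ) (hb0 : ∀ x y, 0 ≤ b x y) (hbdiag : ∀ x, b x x = 0)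
    (hbsymm : ∀ x y, b x y = b y x) (hbsum : ∀ x, Summable fun y => b x y)
    (c : X → ℝ) (hc : ∀ x, 0 ≤ c x) (m : X → ℝ) (hm : ∀ x, 0 < m x) :
    -- (i)
    (∀ f : X → ℂ, inScalDom m b c f →
      inScalDom m b (fun _ => (0 : ℝ)) fun x => (‖f x‖ : ℂ)) ∧
    -- (ii)
    (∀ f : X → ℂ, inScalDom m b c f → ∀ g : X → ℂ,
      inScalDom m b (fun _ => (0 : ℝ)) g →
      (∀ x, 0 ≤ g x ∧ g x ≤ (‖f x‖ : ℂ)) →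
        inScalDom m b c (sgnMulC g f)) ∧
    -- (iii)
    (∀ f f' : X → ℂ, inScalDom m b c f → inScalDom m b c f' →
      (∀ x, f x * conj (f' x) = ((‖f x‖ * ‖f' x‖ : ℝ) : ℂ)) →
        (scalSesqC b (fun _ => (0 : ℝ)) (fun x => (‖f x‖ : ℂ))
            (fun x => (‖f' x‖ : ℂ))).re ≤ (scalSesqC b c f f').re) :=
  stmt12_general b hb0 c hc m
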